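/- For n ≥ 4 and a ∈ [1/2, a*(n,1)] with a*(n,1) = (1/2)√(2n/(n−1)), the function q ↦ b*(n,1,a,q) over integers 1 < q < n attains its maximum at q = n−1, where b*(n,1,a,q) = (1/2)·√( [(n−q+1)(2q − 4a²(q−1))] / [(n−q)(2(q−1) − 4a²(q−2))] ). -/

import Mathlib

/-!
Write `t = 4a²` and `B(k) = 2k − t(k − 1)`, so that `b*(n,1,a,q)² = (n−q+1)B(q) / (4(n−q)B(q−1))`.
The constraint `a ≤ a*(n,1)` says exactly `B(n) ≥ 0`; as `B` is affine with `B(0) = t ≥ 0`, it is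
nonnegative on `[0, n]` and positive on `(0, n)`. After clearing denominators, the comparison with
`q = n − 1` is the identity
`2(n−q)B(n−1)B(q−1) − (n−q+1)B(q)B(n−2) = (n−q−1)B(n)B(q−2)`,
whose right-hand side is a product of nonnegative factors.
-/

/-- `b*(n,1,a,q)` with `p = 1`:
`(1/2)√( [(n−q+1)(2q − 4a²(q−1))] / [(n−q)(2(q−1) − 4a²(q−2))] )`. -/
noncomputable def bstar1 (n : ℕ) (a : ℝ) (q : ℕ) : ℝ :=
  (1 / 2) * Real.sqrt (
    (((n : ℝ) - q + 1) * (2 * (q : ℝ) - 4 * a^2 * ((q : ℝ) - 1))) /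
    (((n : ℝ) - q) * (2 * ((q : ℝ) - 1) - 4 * a^2 * ((q : ℝ) - 2))))

def bstarFactor (t k : ℝ) : ℝ := 2 * k - t * (k - 1)

noncomputable def bstarRatio (t n q : ℝ) : ℝ :=
  (n - q + 1) * bstarFactor t q / ((n - q) * bstarFactor t (q - 1))

theorem bstar1_eq_bstarRatio (n : ℕ) (a : ℝ) (q : ℕ) :
    bstar1 n a q = 1 / 2 * Real.sqrt (bstarRatio (4 * a ^ 2) n q) := by
  unfold bstar1 bstarRatio bstarFactor
  ring_nf

section bstarFactor

variable {t N k : ℝ}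

theorem bstarFactor_nonneg (ht : 0 ≤ t) (hN : 0 ≤ bstarFactor t N) (hk : 0 ≤ k) (hkN : k ≤ N) :
    0 ≤ bstarFactor t k := by
  unfold bstarFactor at *
  rcases le_total t 2 with h | h <;> nlinarith

theorem bstarFactor_pos (ht : 0 ≤ t) (hN : 0 ≤ bstarFactor t N) (hk : 0 < k) (hkN : k < N) :
    0 < bstarFactor t k := by
  unfold bstarFactor at *
  rcases le_total t 2 with h | h
  · rcases le_total k 1 with hk1 | hk1 <;> nlinarith
  · nlinarith

end bstarFactor

theorem bstarFactor_cross_identity (t n q : ℝ) :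
    2 * (n - q) * bstarFactor t (n - 1) * bstarFactor t (q - 1)
      - (n - q + 1) * bstarFactor t q * bstarFactor t (n - 2)
      = (n - q - 1) * bstarFactor t n * bstarFactor t (q - 2) := by
  unfold bstarFactor
  ring

theorem bstarRatio_le_bstarRatio_sub_one {t n q : ℝ} (ht : 0 ≤ t) (hn : 0 ≤ bstarFactor t n)
    (hq : 2 ≤ q) (hqn : q ≤ n - 1) : bstarRatio t n q ≤ bstarRatio t n (n - 1) := by
  have hq_pos : 0 < bstarFactor t (q - 1) := bstarFactor_pos ht hn (by linarith) (by linarith)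
  have hn_pos : 0 < bstarFactor t (n - 1 - 1) := bstarFactor_pos ht hn (by linarith) (by linarith)
  have hcross : 0 ≤ (n - q - 1) * bstarFactor t n * bstarFactor t (q - 2) :=
    mul_nonneg (mul_nonneg (by linarith) hn) (bstarFactor_nonneg ht hn (by linarith) (by linarith))
  unfold bstarRatio
  rw [div_le_div_iff₀ (mul_pos (by linarith) hq_pos) (mul_pos (by linarith) hn_pos), sub_sub,
    one_add_one_eq_two]
  linear_combination hcross - bstarFactor_cross_identity t n q

theorem bstarFactor_nonneg_of_le_half_sqrt {a n : ℝ} (ha : 0 < a) (hn : 1 < n)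
    (ha' : a ≤ 1 / 2 * Real.sqrt (2 * n / (n - 1))) : 0 ≤ bstarFactor (4 * a ^ 2) n := by
  have h : (2 * a) ^ 2 ≤ 2 * n / (n - 1) := (Real.le_sqrt' (by positivity)).1 (by linarith)
  rw [le_div_iff₀ (by linarith)] at h
  unfold bstarFactor
  nlinarith

theorem bstar1_max_at_q_eq_n_sub_one_general
    (n : ℕ) (a : ℝ)
    (ha : 1/2 ≤ a) (ha' : a ≤ (1 / 2) * Real.sqrt (2 * (n : ℝ) / ((n : ℝ) - 1))) :
    ∀ q : ℕ, 1 < q → q < n → bstar1 n a q ≤ bstar1 n a (n - 1) := by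
  intro q hq hqn
  have hq' : (2 : ℝ) ≤ q := by exact_mod_cast hq
  have hqn' : (q : ℝ) + 1 ≤ n := by exact_mod_cast hqn
  rw [bstar1_eq_bstarRatio, bstar1_eq_bstarRatio, Nat.cast_pred (by omega)]
  gcongr
  exact bstarRatio_le_bstarRatio_sub_one (by positivity)
    (bstarFactor_nonneg_of_le_half_sqrt (by linarith) (by linarith) ha') hq' (by linarith)

/-- For `a ∈ [1/2, a*(n,1)]`, `q ↦ b*(n,1,a,q)` over `1 < q < n` is maximized at
`q = n − 1`. -/
theorem bstar1_max_at_q_eq_n_sub_one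
    (n : ℕ) (a : ℝ) (hn : 4 ≤ n)
    (ha : 1/2 ≤ a) (ha' : a ≤ (1 / 2) * Real.sqrt (2 * (n : ℝ) / ((n : ℝ) - 1))) :
    ∀ q : ℕ, 1 < q → q < n → bstar1 n a q ≤ bstar1 n a (n - 1) :=
  bstar1_max_at_q_eq_n_sub_one_general n a ha ha'
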